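/- For a coherent quantale A, the restriction of λ to B(A) is a Boolean algebra isomorphism between B(A) and B(L(A)), and the restriction of ρ to B(A) is a Boolean isomorphism between B(A) and B(R(A)). -/

import Mathlib

open CompleteLattice

/-- A commutative unital quantale: a complete lattice with a commutative monoid
multiplication distributing over arbitrary joins, whose unit is the top element. -/
class CommQuantale (A : Type*) extends CompleteLattice A, CommMonoid A where
  one_eq_top : (1 : A) = ⊤
  mul_sSup : ∀ (a : A) (S : Set A), a * sSup S = ⨆ b ∈ S, a * b

namespace CommQuantale

variable {A : Type*} [CommQuantale A]

/-- A coherent quantale: algebraic, with `1 = ⊤` compact and compacts closed under `*`. -/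
def Coherent (A : Type*) [CommQuantale A] : Prop :=
  (∀ a : A, a = sSup {c : A | IsCompactElement c ∧ c ≤ a}) ∧
  IsCompactElement (⊤ : A) ∧
  ∀ c d : A, IsCompactElement c → IsCompactElement d → IsCompactElement (c * d)

/-- m-prime element. -/
def MPrime (p : A) : Prop :=
  p < ⊤ ∧ ∀ a b : A, a * b ≤ p → a ≤ p ∨ b ≤ p

/-- The radical of an element. -/
def rad (a : A) : A := sInf {p : A | MPrime p ∧ a ≤ p}

/-- Maximal element of `A \ {1}`. -/
def MaxElem (m : A) : Prop := m < ⊤ ∧ ∀ x : A, m ≤ x → x < ⊤ → x = m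

/-- Radical element. -/
def RadElem (a : A) : Prop := rad a = a

/-- Residuation `a → b`. -/
def res (a b : A) : A := sSup {x : A | a * x ≤ b}

/-- Complemented element (member of the Boolean center `B(A)`). -/
def Complemented (e : A) : Prop := ∃ f : A, e ⊔ f = ⊤ ∧ e ⊓ f = ⊥

end CommQuantale

open CommQuantale

structure IsReticulation (A : Type*) [CommQuantale A] (L : Type*)
    [DistribLattice L] [BoundedOrder L] (l : A → L) : Prop where
  surj : ∀ y : L, ∃ c : A, IsCompactElement c ∧ l c = y
  le_sup : ∀ a b : A, IsCompactElement a → IsCompactElement b → l (a ⊔ b) ≤ l a ⊔ l b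
  map_mul : ∀ a b : A, IsCompactElement a → IsCompactElement b → l (a * b) = l a ⊓ l b
  le_iff : ∀ a b : A, IsCompactElement a → IsCompactElement b →
    (l a ≤ l b ↔ ∃ n : ℕ, 1 ≤ n ∧ a ^ n ≤ b)

/-- Complemented element of the frame `R(A)` of radical elements, whose top is `⊤`,
bottom is `rad ⊥`, meet is that of `A` and join is `rad (· ⊔ ·)`. -/
def ComplementedR {A : Type*} [CommQuantale A] (r : A) : Prop :=
  RadElem r ∧ ∃ s : A, RadElem s ∧ rad (r ⊔ s) = ⊤ ∧ r ⊓ s = rad ⊥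

namespace CommQuantale

variable {A : Type*} [CommQuantale A]

lemma mul_sup' (a b c : A) : a * (b ⊔ c) = a * b ⊔ a * c := by
  have h := mul_sSup a {b, c}
  rw [sSup_pair] at h
  rw [h]
  exact iSup_pair

lemma mul_le_mul'' {b c : A} (h : b ≤ c) (a : A) : a * b ≤ a * c := by
  have h2 : a * (b ⊔ c) = a * c := by rw [sup_eq_right.mpr h]
  calc a * b ≤ a * b ⊔ a * c := le_sup_left
    _ = a * c := by rw [← mul_sup', h2]

lemma mul_top' (a : A) : a * ⊤ = a := by rw [← one_eq_top, mul_one]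

lemma mul_le_left (a b : A) : a * b ≤ a :=
  (mul_le_mul'' le_top a).trans (mul_top' a).le

lemma mul_le_right (a b : A) : a * b ≤ b := by rw [mul_comm]; exact mul_le_left b a

lemma mul_le_inf (a b : A) : a * b ≤ a ⊓ b := le_inf (mul_le_left a b) (mul_le_right a b)

lemma top_pow' (n : ℕ) : (⊤ : A) ^ n = ⊤ := by rw [← one_eq_top, one_pow]

lemma pow_le_self {a : A} {n : ℕ} (h : 1 ≤ n) : a ^ n ≤ a := by
  cases n with
  | zero => omega
  | succ m => rw [pow_succ]; exact mul_le_right _ _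

lemma pow_eq_self {e : A} (he : e * e = e) : ∀ n, 1 ≤ n → e ^ n = e := by
  intro n hn
  induction n, hn using Nat.le_induction with
  | base => rw [pow_one]
  | succ m hm ih => rw [pow_succ, ih, he]

lemma sup_mul_sup (p x y : A) : (p ⊔ x) * (p ⊔ y) ≤ p ⊔ x * y := by
  rw [mul_sup']
  refine sup_le ((mul_le_right _ _).trans le_sup_left) ?_
  rw [mul_comm, mul_sup']
  refine sup_le ((mul_le_right _ _).trans le_sup_left) ?_
  rw [mul_comm]
  exact le_sup_right

lemma sup_pow_top {a b : A} (h : a ⊔ b = ⊤) (n : ℕ) : a ⊔ b ^ n = ⊤ := by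
  induction n with
  | zero => rw [pow_zero, one_eq_top, sup_top_eq]
  | succ m ih =>
    refine top_le_iff.mp ?_
    calc (⊤ : A) = ⊤ * ⊤ := (mul_top' ⊤).symm
      _ = (a ⊔ b ^ m) * (a ⊔ b) := by rw [ih, h]
      _ ≤ a ⊔ b ^ m * b := sup_mul_sup a (b ^ m) b
      _ = a ⊔ b ^ (m + 1) := by rw [pow_succ]

lemma inf_eq_bot_of_mul {a b : A} (ht : a ⊔ b = ⊤) (hb : a * b = ⊥) : a ⊓ b = ⊥ := by
  refine le_bot_iff.mp ?_
  calc a ⊓ b = (a ⊓ b) * (a ⊔ b) := by rw [ht, mul_top']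
    _ = (a ⊓ b) * a ⊔ (a ⊓ b) * b := mul_sup' _ _ _
    _ ≤ b * a ⊔ a * b := by
        refine sup_le_sup ?_ ?_
        · rw [mul_comm (a ⊓ b) a, mul_comm b a]; exact mul_le_mul'' inf_le_right a
        · rw [mul_comm (a ⊓ b) b, mul_comm a b]; exact mul_le_mul'' inf_le_left b
    _ = ⊥ := by rw [mul_comm b a, hb, sup_idem]

lemma Complemented.mul_self {e : A} (he : Complemented e) : e * e = e := by
  obtain ⟨f, hs, hi⟩ := he
  have hef : e * f = ⊥ := le_bot_iff.mp (hi ▸ mul_le_inf e f)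
  calc e * e = e * e ⊔ ⊥ := (sup_bot_eq _).symm
    _ = e * e ⊔ e * f := by rw [hef]
    _ = e * (e ⊔ f) := (mul_sup' _ _ _).symm
    _ = e := by rw [hs, mul_top']

lemma bot_compact : IsCompactElement (⊥ : A) := fun _ _ hne _ _ _ =>
  let ⟨y, hy⟩ := hne; ⟨y, hy, bot_le⟩

lemma compact_sup {c d : A} (hc : IsCompactElement c) (hd : IsCompactElement d) :
    IsCompactElement (c ⊔ d) := by
  rw [isCompactElement_iff_le_of_directed_sSup_le] at hc hd ⊢
  intro s hne hdir hs
  obtain ⟨x, hx, hcx⟩ := hc s hne hdir (le_sup_left.trans hs)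
  obtain ⟨y, hy, hdy⟩ := hd s hne hdir (le_sup_right.trans hs)
  obtain ⟨z, hz, hxz, hyz⟩ := hdir x hx y hy
  exact ⟨z, hz, sup_le (hcx.trans hxz) (hdy.trans hyz)⟩

/-! ### radical lemmas -/

lemma le_rad (a : A) : a ≤ rad a := le_sInf fun _ hp => hp.2

lemma rad_mono {a b : A} (h : a ≤ b) : rad a ≤ rad b :=
  sInf_le_sInf fun p hp => ⟨hp.1, h.trans hp.2⟩

lemma rad_le_of_prime {a p : A} (hp : MPrime p) (h : a ≤ p) : rad a ≤ p := sInf_le ⟨hp, h⟩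

lemma rad_rad (a : A) : rad (rad a) = rad a := by
  refine le_antisymm (sInf_le_sInf fun p hp => ⟨hp.1, rad_le_of_prime hp.1 hp.2⟩) (le_rad _)

lemma rad_top : rad (⊤ : A) = ⊤ :=
  le_antisymm le_top (le_sInf fun p hp => hp.2)

lemma prime_pow_le {p a : A} (hp : MPrime p) : ∀ n, 1 ≤ n → a ^ n ≤ p → a ≤ p := by
  intro n hn
  induction n, hn using Nat.le_induction with
  | base => intro h; rwa [pow_one] at h
  | succ m hm ih =>
    intro h
    rw [pow_succ] at h
    rcases hp.2 _ _ h with h2 | h2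
    · exact ih h2
    · exact h2

lemma rad_pow {a : A} {n : ℕ} (hn : 1 ≤ n) : rad (a ^ n) = rad a := by
  refine le_antisymm (rad_mono (pow_le_self hn)) ?_
  exact le_sInf fun p hp => rad_le_of_prime hp.1 (prime_pow_le hp.1 n hn hp.2)

lemma rad_inf_le_rad_mul (a b : A) : rad a ⊓ rad b ≤ rad (a * b) := by
  refine le_sInf fun p hp => ?_
  rcases hp.1.2 a b hp.2 with h | h
  · exact inf_le_left.trans (rad_le_of_prime hp.1 h)
  · exact inf_le_right.trans (rad_le_of_prime hp.1 h)

/-! ### prime existence via Zorn -/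

lemma exists_prime (hA : Coherent A) {k a : A} (hk : IsCompactElement k)
    (h : ∀ n, 1 ≤ n → ¬ k ^ n ≤ a) : ∃ p : A, MPrime p ∧ a ≤ p ∧ ¬ k ≤ p := by
  have hkp : ∀ n, 1 ≤ n → IsCompactElement (k ^ n) := by
    intro n hn
    induction n, hn using Nat.le_induction with
    | base => rwa [pow_one]
    | succ m hm ih => rw [pow_succ]; exact hA.2.2 _ _ ih hk
  set S := {x : A | a ≤ x ∧ ∀ n, 1 ≤ n → ¬ k ^ n ≤ x} with hS
  have haS : a ∈ S := ⟨le_rfl, h⟩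
  obtain ⟨m, ham, hmS, hmax⟩ : ∃ m, a ≤ m ∧ Maximal (· ∈ S) m := by
    refine zorn_le_nonempty₀ S ?_ a haS
    intro c hcS hchain y hy
    refine ⟨sSup c, ⟨(hcS hy).1.trans (le_sSup hy), ?_⟩, fun z hz => le_sSup hz⟩
    intro n hn hle
    obtain ⟨z, hzc, hzle⟩ :=
      (isCompactElement_iff_le_of_directed_sSup_le A (k ^ n)).mp (hkp n hn) c ⟨y, hy⟩
        (hchain.directedOn) hle
    exact (hcS hzc).2 n hn hzle
  have hknm : ¬ k ≤ m := fun hle => hmS.2 1 le_rfl (by rwa [pow_one])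
  refine ⟨m, ⟨?_, ?_⟩, ham, hknm⟩
  · exact lt_top_iff_ne_top.mpr fun hm => hknm (hm ▸ le_top)
  · intro x y hxy
    by_contra hcon
    push_neg at hcon
    obtain ⟨hx, hy⟩ := hcon
    have hnot : ∀ w : A, ¬ w ≤ m → ∃ n, 1 ≤ n ∧ k ^ n ≤ m ⊔ w := by
      intro w hw
      by_contra hc
      push_neg at hc
      have hmem : m ⊔ w ∈ S := ⟨ham.trans (le_sup_left.trans le_rfl),
        fun n hn hle => (hc n hn) hle⟩
      exact hw (le_sup_right.trans (hmax hmem le_sup_left))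
    obtain ⟨n, hn, hnle⟩ := hnot x hx
    obtain ⟨n', hn', hnle'⟩ := hnot y hy
    refine hmS.2 (n + n') (by omega) ?_
    calc k ^ (n + n') = k ^ n * k ^ n' := pow_add k n n'
      _ ≤ (m ⊔ x) * (m ⊔ y) := (mul_le_mul'' hnle' _).trans
          (by rw [mul_comm, mul_comm (m ⊔ x)]; exact mul_le_mul'' hnle _)
      _ ≤ m ⊔ x * y := sup_mul_sup m x y
      _ ≤ m := sup_le le_rfl hxy

lemma eq_top_of_rad_eq_top (hA : Coherent A) {a : A} (h : rad a = ⊤) : a = ⊤ := by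
  by_contra ha
  have h2 : ∀ n, 1 ≤ n → ¬ (⊤ : A) ^ n ≤ a := by
    intro n _ hle
    rw [top_pow'] at hle
    exact ha (top_le_iff.mp hle)
  obtain ⟨p, hp, hap, hkp⟩ := exists_prime hA hA.2.1 h2
  exact hkp (h ▸ rad_le_of_prime hp hap)

lemma pow_le_of_compact_le_rad (hA : Coherent A) {k a : A} (hk : IsCompactElement k)
    (h : k ≤ rad a) : ∃ n, 1 ≤ n ∧ k ^ n ≤ a := by
  by_contra hc
  push_neg at hc
  obtain ⟨p, hp, hap, hkp⟩ := exists_prime hA hk fun n hn => hc n hn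
  exact hkp (h.trans (rad_le_of_prime hp hap))

/-! ### compact decomposition -/

lemma exists_compact_pair (hA : Coherent A) {r s : A} (h : r ⊔ s = ⊤) :
    ∃ c d : A, IsCompactElement c ∧ IsCompactElement d ∧ c ≤ r ∧ d ≤ s ∧ c ⊔ d = ⊤ := by
  set T := {x : A | ∃ c d : A, IsCompactElement c ∧ IsCompactElement d ∧
    c ≤ r ∧ d ≤ s ∧ x = c ⊔ d} with hT
  have hne : T.Nonempty := ⟨⊥ ⊔ ⊥, ⊥, ⊥, bot_compact, bot_compact, bot_le, bot_le, rfl⟩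
  have hdir : DirectedOn (· ≤ ·) T := by
    rintro x ⟨c, d, hc, hd, hcr, hds, rfl⟩ y ⟨c', d', hc', hd', hcr', hds', rfl⟩
    exact ⟨(c ⊔ c') ⊔ (d ⊔ d'), ⟨c ⊔ c', d ⊔ d', compact_sup hc hc', compact_sup hd hd',
      sup_le hcr hcr', sup_le hds hds', rfl⟩,
      sup_le (le_sup_left.trans le_sup_left) (le_sup_left.trans le_sup_right),
      sup_le (le_sup_right.trans le_sup_left) (le_sup_right.trans le_sup_right)⟩
  have hr : r ≤ sSup T := by
    conv_lhs => rw [hA.1 r]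
    refine sSup_le fun c hc => le_sSup_of_le ⟨c, ⊥, hc.1, bot_compact, hc.2, bot_le, rfl⟩ ?_
    exact le_sup_left
  have hs : s ≤ sSup T := by
    conv_lhs => rw [hA.1 s]
    refine sSup_le fun d hd => le_sSup_of_le ⟨⊥, d, bot_compact, hd.1, bot_le, hd.2, rfl⟩ ?_
    exact le_sup_right
  have htop : (⊤ : A) ≤ sSup T := h ▸ sup_le hr hs
  obtain ⟨x, hxT, hx⟩ :=
    (isCompactElement_iff_le_of_directed_sSup_le A ⊤).mp hA.2.1 T hne hdir htop
  obtain ⟨c, d, hc, hd, hcr, hds, rfl⟩ := hxT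
  exact ⟨c, d, hc, hd, hcr, hds, top_le_iff.mp hx⟩

lemma Complemented.compact (hA : Coherent A) {e : A} (he : Complemented e) :
    IsCompactElement e := by
  obtain ⟨f, hs, hi⟩ := he
  obtain ⟨c, d, hc, _, hcr, hds, hcd⟩ := exists_compact_pair hA hs
  have hed : e * d = ⊥ := le_bot_iff.mp <|
    (mul_le_inf e d).trans ((inf_le_inf_left e hds).trans hi.le)
  have : e = c := by
    have h1 : e = e * c ⊔ e * d := by rw [← mul_sup', hcd, mul_top']
    have h2 : e = e * c := by conv_lhs => rw [h1, hed, sup_bot_eq]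
    exact le_antisymm (h2.le.trans (mul_le_right e c)) hcr
  rwa [this]

/-! ### reticulation lemmas -/

section Retic

variable {L : Type*} [DistribLattice L] [BoundedOrder L] {l : A → L}

lemma l_mono (h : IsReticulation A L l) {a b : A} (ha : IsCompactElement a)
    (hb : IsCompactElement b) (hab : a ≤ b) : l a ≤ l b :=
  (h.le_iff a b ha hb).mpr ⟨1, le_rfl, by rwa [pow_one]⟩

lemma l_top (hA : Coherent A) (h : IsReticulation A L l) : l (⊤ : A) = ⊤ := by
  obtain ⟨c, hc, hceq⟩ := h.surj ⊤
  exact top_le_iff.mp (hceq ▸ l_mono h hc hA.2.1 le_top)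

lemma l_bot (h : IsReticulation A L l) : l (⊥ : A) = ⊥ := by
  obtain ⟨c, hc, hceq⟩ := h.surj ⊥
  exact le_bot_iff.mp (hceq ▸ l_mono h bot_compact hc bot_le)

lemma l_pow (hA : Coherent A) (h : IsReticulation A L l) {c : A} (hc : IsCompactElement c) :
    ∀ n, 1 ≤ n → l (c ^ n) = l c := by
  have hcp : ∀ n, 1 ≤ n → IsCompactElement (c ^ n) := by
    intro n hn
    induction n, hn using Nat.le_induction with
    | base => rwa [pow_one]
    | succ m hm ih => rw [pow_succ]; exact hA.2.2 _ _ ih hc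
  intro n hn
  induction n, hn using Nat.le_induction with
  | base => rw [pow_one]
  | succ m hm ih =>
    rw [pow_succ, h.map_mul _ _ (hcp m hm) hc, ih, inf_idem]

end Retic

end CommQuantale

theorem stmt17 {A : Type*} [CommQuantale A]
    {L : Type*} [DistribLattice L] [BoundedOrder L]
    (hA : Coherent A) {l : A → L} (h : IsReticulation A L l) :
    ((∀ e : A, Complemented e → ∃ z : L, l e ⊔ z = ⊤ ∧ l e ⊓ z = ⊥) ∧
     (∀ e f : A, Complemented e → Complemented f → (e ≤ f ↔ l e ≤ l f)) ∧
     (∀ y : L, (∃ z : L, y ⊔ z = ⊤ ∧ y ⊓ z = ⊥) →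
        ∃ e : A, Complemented e ∧ l e = y)) ∧
    ((∀ e : A, Complemented e → ComplementedR (rad e)) ∧
     (∀ e f : A, Complemented e → Complemented f → (e ≤ f ↔ rad e ≤ rad f)) ∧
     (∀ r : A, ComplementedR r → ∃ e : A, Complemented e ∧ rad e = r)) := by
  constructor
  · refine ⟨?_, ?_, ?_⟩
    · -- λ sends complemented elements to complemented elements
      rintro e ⟨f, hs, hi⟩
      have hec : IsCompactElement e := Complemented.compact hA ⟨f, hs, hi⟩
      have hfc : IsCompactElement f :=
        Complemented.compact hA ⟨e, by rwa [sup_comm], by rwa [inf_comm]⟩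
      refine ⟨l f, top_le_iff.mp ?_, ?_⟩
      · calc (⊤ : L) = l ⊤ := (l_top hA h).symm
          _ = l (e ⊔ f) := by rw [hs]
          _ ≤ l e ⊔ l f := h.le_sup e f hec hfc
      · have hef : e * f = ⊥ := le_bot_iff.mp (hi ▸ mul_le_inf e f)
        calc l e ⊓ l f = l (e * f) := (h.map_mul e f hec hfc).symm
          _ = l ⊥ := by rw [hef]
          _ = ⊥ := l_bot h
    · -- λ is an order isomorphism on complemented elements
      intro e f he hf
      have hec := Complemented.compact hA he
      have hfc := Complemented.compact hA hf
      refine ⟨fun hef => (h.le_iff e f hec hfc).mpr ⟨1, le_rfl, by rwa [pow_one]⟩, fun hle => ?_⟩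
      obtain ⟨n, hn, hpow⟩ := (h.le_iff e f hec hfc).mp hle
      rwa [pow_eq_self he.mul_self n hn] at hpow
    · -- λ is surjective onto complemented elements of L
      rintro y ⟨z, hyz, hyz'⟩
      obtain ⟨c, hc, rfl⟩ := h.surj y
      obtain ⟨d, hd, rfl⟩ := h.surj z
      have hcd : IsCompactElement (c ⊔ d) := compact_sup hc hd
      have htop : c ⊔ d = ⊤ := by
        have h1 : l (c ⊔ d) = l (⊤ : A) := by
          rw [l_top hA h]
          refine top_le_iff.mp ?_
          rw [← hyz]
          exact sup_le (l_mono h hc hcd le_sup_left) (l_mono h hd hcd le_sup_right)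
        obtain ⟨n, hn, hpow⟩ := (h.le_iff ⊤ (c ⊔ d) hA.2.1 hcd).mp h1.symm.le
        rw [top_pow'] at hpow
        exact top_le_iff.mp hpow
      have hmul : l (c * d) ≤ l (⊥ : A) := by
        rw [h.map_mul c d hc hd, hyz', l_bot h]
      obtain ⟨n, hn, hpow⟩ := (h.le_iff (c * d) ⊥ (hA.2.2 c d hc hd) bot_compact).mp hmul
      have hpowbot : (c * d) ^ n = ⊥ := le_bot_iff.mp hpow
      have h1 : d ⊔ c ^ n = ⊤ := sup_pow_top (by rw [sup_comm]; exact htop) n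
      have h2 : c ^ n ⊔ d ^ n = ⊤ := sup_pow_top (by rw [sup_comm]; exact h1) n
      have hmulbot : c ^ n * d ^ n = ⊥ := by rw [← mul_pow]; exact hpowbot
      exact ⟨c ^ n, ⟨d ^ n, h2, inf_eq_bot_of_mul h2 hmulbot⟩, l_pow hA h hc n hn⟩
  · refine ⟨?_, ?_, ?_⟩
    · -- ρ sends complemented elements to R-complemented elements
      rintro e ⟨f, hs, hi⟩
      have hef : e * f = ⊥ := le_bot_iff.mp (hi ▸ mul_le_inf e f)
      refine ⟨rad_rad e, rad f, rad_rad f, top_le_iff.mp ?_, ?_⟩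
      · calc (⊤ : A) = rad ⊤ := rad_top.symm
          _ = rad (e ⊔ f) := by rw [hs]
          _ ≤ rad (rad e ⊔ rad f) := rad_mono (sup_le_sup (le_rad e) (le_rad f))
      · refine le_antisymm ?_ (le_inf (rad_mono bot_le) (rad_mono bot_le))
        calc rad e ⊓ rad f ≤ rad (e * f) := rad_inf_le_rad_mul e f
          _ = rad ⊥ := by rw [hef]
    · -- ρ is an order isomorphism on complemented elements
      intro e f he _
      refine ⟨fun hle => rad_mono hle, fun hle => ?_⟩
      obtain ⟨e', hs, hi⟩ := he
      have hfe' : f ⊔ e' = ⊤ := by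
        refine eq_top_of_rad_eq_top hA (top_le_iff.mp ?_)
        calc (⊤ : A) = e ⊔ e' := hs.symm
          _ ≤ rad e ⊔ rad e' := sup_le_sup (le_rad e) (le_rad e')
          _ ≤ rad f ⊔ rad e' := sup_le_sup hle le_rfl
          _ ≤ rad (f ⊔ e') := sup_le (rad_mono le_sup_left) (rad_mono le_sup_right)
      have hee' : e * e' = ⊥ := le_bot_iff.mp (hi ▸ mul_le_inf e e')
      calc e = e * (f ⊔ e') := by rw [hfe', mul_top']
        _ = e * f ⊔ e * e' := mul_sup' _ _ _
        _ = e * f := by rw [hee', sup_bot_eq]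
        _ ≤ f := mul_le_right e f
    · -- ρ is surjective onto complemented elements of R(A)
      rintro r ⟨hr, s, _, hrs, hinf⟩
      have htop : r ⊔ s = ⊤ := eq_top_of_rad_eq_top hA hrs
      obtain ⟨c, d, hc, hd, hcr, hds, hcd⟩ := exists_compact_pair hA htop
      have hcdle : c * d ≤ rad ⊥ := by
        calc c * d ≤ c ⊓ d := mul_le_inf c d
          _ ≤ r ⊓ s := inf_le_inf hcr hds
          _ = rad ⊥ := hinf
      obtain ⟨n, hn, hpow⟩ := pow_le_of_compact_le_rad hA (hA.2.2 c d hc hd) hcdle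
      have hpowbot : (c * d) ^ n = ⊥ := le_bot_iff.mp hpow
      have h1 : d ⊔ c ^ n = ⊤ := sup_pow_top (by rw [sup_comm]; exact hcd) n
      have h2 : c ^ n ⊔ d ^ n = ⊤ := sup_pow_top (by rw [sup_comm]; exact h1) n
      have hmulbot : c ^ n * d ^ n = ⊥ := by rw [← mul_pow]; exact hpowbot
      refine ⟨c ^ n, ⟨d ^ n, h2, inf_eq_bot_of_mul h2 hmulbot⟩, le_antisymm ?_ ?_⟩
      · rw [rad_pow hn]
        exact (rad_mono hcr).trans hr.le
      · have ha : r * c ^ n ≤ rad (c ^ n) := (mul_le_right _ _).trans (le_rad _)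
        have hb : r * d ^ n ≤ rad (c ^ n) := by
          have hrds : r * d ^ n ≤ r ⊓ s := le_inf (mul_le_left _ _)
            ((mul_le_right _ _).trans ((pow_le_self hn).trans hds))
          exact (hrds.trans hinf.le).trans (rad_mono bot_le)
        calc r = r * (c ^ n ⊔ d ^ n) := by rw [h2, mul_top']
          _ = r * c ^ n ⊔ r * d ^ n := mul_sup' _ _ _
          _ ≤ rad (c ^ n) := sup_le ha hb
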